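/- Let n ≥ 2, n−2 ≤ Δ ≤ n, and let x ∈ [−1,1]ⁿ satisfy s₁(x) > Δ, where s₁(x) = max over odd sign vectors λ of ∑λᵢxᵢ. Then the L₁-distance from x to the set N(Δ) = {y ∈ [−1,1]ⁿ : s₁(y) ≤ Δ} equals s₁(x) − Δ. Moreover, this distance is attained by changing a single coordinate of x: for each index k, the point obtained from x by decreasing the k-th term λ_k x_k by s₁(x) − Δ (where λ is the maximizing sign vector) lies in N(Δ). -/

import Mathlib

/-!
Let `λ` attain `s₁(x)` and put `t = s₁(x) - Δ`. Since `∑ λᵢ (xᵢ - yᵢ) ≤ ∑ |xᵢ - yᵢ|`, every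
`y ∈ N(Δ)` is at L₁-distance at least `t` from `x`. Conversely, lower `λₖ xₖ` by `t`: an odd sign
vector `μ` with `μₖ = λₖ` loses `t`, and one with `μₖ ≠ λₖ` gains `t`; but the latter differs from
`λ` in an even, hence at least two, number of places, so `∑ μᵢ xᵢ + ∑ λᵢ xᵢ ≤ 2 (n - 2) ≤ 2Δ`,
which leaves exactly room for the gain. The new coordinate stays in `[-1, 1]` because
`λₖ xₖ ≥ s₁(x) - (n - 1) ≥ t - 1`.
-/

open Finset

def IsOddSign (n : ℕ) (l : Fin n → ℝ) : Prop :=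
  (∀ i, l i = 1 ∨ l i = -1) ∧ (∏ i, l i) = -1

noncomputable def s1 (n : ℕ) (x : Fin n → ℝ) : ℝ :=
  sSup ((fun l => ∑ i, l i * x i) '' {l | IsOddSign n l})

def Cube (n : ℕ) : Set (Fin n → ℝ) := {x | ∀ i, x i ∈ Set.Icc (-1:ℝ) 1}

def NPoly (n : ℕ) (Δ : ℝ) : Set (Fin n → ℝ) :=
  {x | x ∈ Cube n ∧ ∀ l, IsOddSign n l → (∑ i, l i * x i) ≤ Δ}

lemma sum_mul_update {ι : Type*} [Fintype ι] [DecidableEq ι] (m x : ι → ℝ) (k : ι) (v : ℝ) :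
    ∑ i, m i * Function.update x k v i = ∑ i, m i * x i + m k * (v - x k) := by
  rw [Fintype.sum_eq_add_sum_compl k, Fintype.sum_eq_add_sum_compl k (fun i => m i * x i),
    Function.update_self,
    sum_congr rfl fun i hi => by rw [Function.update_of_ne (by simpa using hi)]]
  ring

lemma sum_abs_sub_update {ι : Type*} [Fintype ι] [DecidableEq ι] (x : ι → ℝ) (k : ι) (v : ℝ) :
    ∑ i, |x i - Function.update x k v i| = |x k - v| := by
  rw [Fintype.sum_eq_add_sum_compl k, Function.update_self,
    sum_congr rfl fun i hi => by rw [Function.update_of_ne (by simpa using hi)]]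
  simp

namespace IsOddSign

variable {n : ℕ} {l m x : Fin n → ℝ}

lemma abs_eq_one (hl : IsOddSign n l) (i : Fin n) : |l i| = 1 := by
  rcases hl.1 i with h | h <;> simp [h]

lemma mul_le_one (hl : IsOddSign n l) (hx : x ∈ Cube n) (i : Fin n) : l i * x i ≤ 1 := by
  rcases hl.1 i with h | h <;> simp [h] <;> linarith [(hx i).1, (hx i).2]

lemma mul_eq_ite (hl : IsOddSign n l) (hm : IsOddSign n m) (i : Fin n) :
    m i * l i = if m i = l i then 1 else -1 := by
  rcases hm.1 i with h | h <;> rcases hl.1 i with h' | h' <;> norm_num [h, h']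

lemma add_mul_le_ite (hl : IsOddSign n l) (hm : IsOddSign n m) (hx : x ∈ Cube n) (i : Fin n) :
    (m i + l i) * x i ≤ 2 * if m i = l i then 1 else 0 := by
  rcases hm.1 i with h | h <;> rcases hl.1 i with h' | h' <;> norm_num [h, h'] <;>
    linarith [(hx i).1, (hx i).2]

lemma even_card_ne (hl : IsOddSign n l) (hm : IsOddSign n m) : Even #{i | m i ≠ l i} := by
  have hprod : ∏ i, m i * l i = (-1) ^ #{i | m i ≠ l i} := by
    simp only [hl.mul_eq_ite hm, prod_ite, prod_const_one, prod_const, one_mul]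
  rw [prod_mul_distrib, hm.2, hl.2, neg_one_mul, neg_neg, eq_comm] at hprod
  exact (neg_one_pow_eq_one_iff_even (by norm_num)).mp hprod

lemma two_le_card_ne (hl : IsOddSign n l) (hm : IsOddSign n m) {k : Fin n} (hk : m k ≠ l k) :
    2 ≤ #{i | m i ≠ l i} := by
  have hpos : 0 < #{i | m i ≠ l i} := card_pos.mpr ⟨k, by simpa using hk⟩
  obtain ⟨c, hc⟩ := hl.even_card_ne hm
  omega

lemma sum_mul_add_sum_mul_le (hl : IsOddSign n l) (hm : IsOddSign n m) (hx : x ∈ Cube n)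
    {k : Fin n} (hk : m k ≠ l k) :
    ∑ i, m i * x i + ∑ i, l i * x i ≤ 2 * ((n : ℝ) - 2) := by
  have hcard : #{i | m i = l i} + #{i | m i ≠ l i} = n := by
    simpa using card_filter_add_card_filter_not (s := univ) (fun i => m i = l i)
  have hsame : (#{i | m i = l i} : ℝ) ≤ n - 2 := by
    have := hl.two_le_card_ne hm hk
    rw [le_sub_iff_add_le]
    exact_mod_cast (by omega : #{i | m i = l i} + 2 ≤ n)
  calc ∑ i, m i * x i + ∑ i, l i * x i = ∑ i, (m i + l i) * x i := by
        rw [← sum_add_distrib]; simp only [add_mul]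
    _ ≤ ∑ i, 2 * if m i = l i then (1 : ℝ) else 0 := sum_le_sum fun i _ => hl.add_mul_le_ite hm hx i
    _ ≤ 2 * ((n : ℝ) - 2) := by rw [← mul_sum, sum_boole]; gcongr

lemma sum_mul_le_mul_add (hl : IsOddSign n l) (hx : x ∈ Cube n) (k : Fin n) :
    ∑ i, l i * x i ≤ l k * x k + ((n : ℝ) - 1) := by
  have hcompl : ∑ i ∈ {k}ᶜ, l i * x i ≤ ((n : ℝ) - 1) := by
    calc ∑ i ∈ {k}ᶜ, l i * x i ≤ ∑ i ∈ ({k}ᶜ : Finset (Fin n)), (1 : ℝ) :=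
          sum_le_sum fun i _ => hl.mul_le_one hx i
      _ = (n : ℝ) - 1 := by
          rw [sum_const, card_compl, card_singleton, Fintype.card_fin, nsmul_one,
            Nat.cast_pred (Fin.pos k)]
  rw [Fintype.sum_eq_add_sum_compl k]
  linarith

end IsOddSign

lemma finite_setOf_isOddSign (n : ℕ) : {l : Fin n → ℝ | IsOddSign n l}.Finite :=
  (Set.Finite.pi' fun _ => (Set.finite_singleton (-1 : ℝ)).insert 1).subset fun _ hl i => hl.1 i

lemma exists_isOddSign {n : ℕ} (hn : 0 < n) : ∃ l, IsOddSign n l := by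
  refine ⟨fun i => if i = ⟨0, hn⟩ then -1 else 1, fun i => ?_, ?_⟩
  · dsimp only; split_ifs <;> simp
  · simp [prod_ite_eq']

lemma sum_mul_le_s1 {n : ℕ} {l : Fin n → ℝ} (hl : IsOddSign n l) (x : Fin n → ℝ) :
    ∑ i, l i * x i ≤ s1 n x :=
  le_csSup ((finite_setOf_isOddSign n).image _).bddAbove ⟨l, hl, rfl⟩

lemma exists_sum_mul_eq_s1 {n : ℕ} (hn : 0 < n) (x : Fin n → ℝ) :
    ∃ l, IsOddSign n l ∧ ∑ i, l i * x i = s1 n x := by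
  obtain ⟨l, hl⟩ := exists_isOddSign hn
  exact (Set.Nonempty.image _ ⟨l, hl⟩).csSup_mem ((finite_setOf_isOddSign n).image _)

lemma sum_mul_sub_le_sum_abs_sub {n : ℕ} {Δ : ℝ} {l x y : Fin n → ℝ} (hl : IsOddSign n l)
    (hy : y ∈ NPoly n Δ) : ∑ i, l i * x i - Δ ≤ ∑ i, |x i - y i| := by
  have hdiff : ∑ i, l i * (x i - y i) ≤ ∑ i, |x i - y i| := sum_le_sum fun i _ => by
    calc l i * (x i - y i) ≤ |l i * (x i - y i)| := le_abs_self _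
      _ = |x i - y i| := by rw [abs_mul, hl.abs_eq_one, one_mul]
  simp only [mul_sub, sum_sub_distrib] at hdiff
  linarith [hy.2 l hl]

lemma update_mem_cube {n : ℕ} {x : Fin n → ℝ} (hx : x ∈ Cube n) (k : Fin n) {v : ℝ}
    (hv : v ∈ Set.Icc (-1 : ℝ) 1) : Function.update x k v ∈ Cube n := by
  intro i
  rcases eq_or_ne i k with rfl | hik
  · simpa using hv
  · simpa [Function.update_of_ne hik] using hx i

lemma update_mem_nPoly {n : ℕ} {Δ : ℝ} (hΔ : (n : ℝ) - 2 ≤ Δ) {x l : Fin n → ℝ}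
    (hx : x ∈ Cube n) (hs : Δ < s1 n x) (hl : IsOddSign n l)
    (hmax : ∑ i, l i * x i = s1 n x) (k : Fin n) :
    Function.update x k (x k - l k * (s1 n x - Δ)) ∈ NPoly n Δ := by
  refine ⟨update_mem_cube hx k ?_, fun m hm => ?_⟩
  · have hk := hl.sum_mul_le_mul_add hx k
    have := hl.mul_le_one hx k
    rcases hl.1 k with h | h <;> rw [h] at hk this ⊢ <;> constructor <;> linarith
  · rw [sum_mul_update, sub_sub_cancel_left, mul_neg, ← mul_assoc, hl.mul_eq_ite hm]
    split_ifs with hmk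
    · linarith [sum_mul_le_s1 hm x]
    · linarith [hl.sum_mul_add_sum_mul_le hm hx hmk]

theorem stmt10_general (n : ℕ) (hn : 2 ≤ n) (Δ : ℝ) (hΔ1 : (n:ℝ) - 2 ≤ Δ)
    (x : Fin n → ℝ) (hx : x ∈ Cube n) (hs : Δ < s1 n x) :
    sInf {d : ℝ | ∃ y ∈ NPoly n Δ, (∑ i, |x i - y i|) = d} = s1 n x - Δ ∧
    (∀ l, IsOddSign n l → (∑ i, l i * x i) = s1 n x →
      ∀ k, Function.update x k (x k - l k * (s1 n x - Δ)) ∈ NPoly n Δ) := by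
  have hmem := fun l (hl : IsOddSign n l) hmax k => update_mem_nPoly hΔ1 hx hs hl hmax k
  obtain ⟨l, hl, hmax⟩ := exists_sum_mul_eq_s1 (by omega) x
  refine ⟨IsLeast.csInf_eq ⟨⟨_, hmem l hl hmax ⟨0, by omega⟩, ?_⟩, ?_⟩, hmem⟩
  · rw [sum_abs_sub_update, sub_sub_cancel, abs_mul, hl.abs_eq_one, one_mul,
      abs_of_pos (sub_pos.2 hs)]
  · rintro _ ⟨y, hy, rfl⟩
    simpa [hmax] using sum_mul_sub_le_sum_abs_sub (x := x) hl hy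

theorem stmt10 (n : ℕ) (hn : 2 ≤ n) (Δ : ℝ) (hΔ1 : (n:ℝ) - 2 ≤ Δ) (hΔ2 : Δ ≤ n)
    (x : Fin n → ℝ) (hx : x ∈ Cube n) (hs : Δ < s1 n x) :
    sInf {d : ℝ | ∃ y ∈ NPoly n Δ, (∑ i, |x i - y i|) = d} = s1 n x - Δ ∧
    (∀ l, IsOddSign n l → (∑ i, l i * x i) = s1 n x →
      ∀ k, Function.update x k (x k - l k * (s1 n x - Δ)) ∈ NPoly n Δ) :=
  stmt10_general n hn Δ hΔ1 x hx hs
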